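/- Let G = (V,E) be an undirected graph on V = {1,…,k} and suppose vertex k is a leaf of G whose unique neighbor is vertex 1. If p = (a_1,…,a_k) is an equilibrium of the formation control system on G, then u_{1k}(p) = 0, and the sub-configuration p' = (a_1,…,a_{k−1}) is an equilibrium of the formation control system on the subgraph G' induced by the vertices {1,…,k−1} (with the same target vectors b_1,…,b_{k−1}). -/

import Mathlib

/-!
At a leaf `k` with neighbour `1` the equilibrium equation has a single term,
`u_{k1} • (a_k - a_1) = 0`, and `u_{k1} = 0` by convention when `a_k = a_1`; so `u_{k1} = 0`,
and `u_{1k} = u_{k1}` by symmetry of the control law. Hence the term contributed by `k` to the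
equilibrium equation at `1` vanishes, and deleting `k` leaves every other equation unchanged.
-/

open Finset
open scoped RealInnerProductSpace Classical

/-- The decentralized control law `u_ij(p)`. -/
noncomputable def uCtrl {n N : ℕ} (b a : Fin N → EuclideanSpace ℝ (Fin n)) (i j : Fin N) : ℝ :=
  if a j = a i then 0 else ⟪b j - b i, a j - a i⟫ / ‖a j - a i‖ ^ 2 - 1

/-- The quadratic Lyapunov function `Φ(p) = ∑ ‖a i - b i‖²`. -/
noncomputable def Phi {n N : ℕ} (b a : Fin N → EuclideanSpace ℝ (Fin n)) : ℝ :=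
  ∑ i, ‖a i - b i‖ ^ 2

/-- Sum over each undirected edge of `G` exactly once. -/
noncomputable def edgeSum {N : ℕ} (G : SimpleGraph (Fin N)) (f : Fin N → Fin N → ℝ) : ℝ :=
  ∑ p ∈ Finset.univ.filter (fun p : Fin N × Fin N => p.1 < p.2 ∧ G.Adj p.1 p.2), f p.1 p.2

/-- `p = a` is an equilibrium of the formation control system:
`∑_{j ∈ V_i} u_ij (p) • (a i - a j) = 0` for every vertex `i`. -/
noncomputable def IsEquilibrium {n N : ℕ} (G : SimpleGraph (Fin N))
    (b a : Fin N → EuclideanSpace ℝ (Fin n)) : Prop :=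
  ∀ i, ∑ j ∈ Finset.univ.filter (fun j => G.Adj i j), uCtrl b a i j • (a i - a j) = 0

section FormationControl

variable {n N : ℕ} (b a : Fin N → EuclideanSpace ℝ (Fin n))

theorem uCtrl_comm (i j : Fin N) : uCtrl b a i j = uCtrl b a j i := by
  unfold uCtrl
  by_cases h : a j = a i
  · rw [if_pos h, if_pos h.symm]
  · rw [if_neg h, if_neg (Ne.symm h), ← neg_sub (b i), ← neg_sub (a i), inner_neg_neg,
      norm_neg]

theorem uCtrl_eq_zero_of_smul_eq_zero {i j : Fin N}
    (h : uCtrl b a i j • (a i - a j) = 0) : uCtrl b a i j = 0 := by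
  by_cases hij : a j = a i
  · simp only [uCtrl, if_pos hij]
  · exact (smul_eq_zero.mp h).resolve_right (sub_ne_zero.mpr (Ne.symm hij))

theorem uCtrl_comp {M : ℕ} (f : Fin M → Fin N) (i j : Fin M) :
    uCtrl (b ∘ f) (a ∘ f) i j = uCtrl b a (f i) (f j) := rfl

variable {b a}

theorem IsEquilibrium.uCtrl_eq_zero_of_neighborSet_eq_singleton {G : SimpleGraph (Fin N)}
    (heq : IsEquilibrium G b a) {v w : Fin N} (hv : G.neighborSet v = {w}) :
    uCtrl b a v w = 0 := by
  have hnbr : univ.filter (fun j => G.Adj v j) = {w} := by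
    ext j
    simpa [SimpleGraph.mem_neighborSet] using Set.ext_iff.mp hv j
  have hsum := heq v
  rw [hnbr, sum_singleton] at hsum
  exact uCtrl_eq_zero_of_smul_eq_zero b a hsum

end FormationControl

theorem IsEquilibrium.comap_castSucc {n N : ℕ} {G : SimpleGraph (Fin (N + 1))}
    {b a : Fin (N + 1) → EuclideanSpace ℝ (Fin n)} (heq : IsEquilibrium G b a)
    (hlast : ∀ i, G.Adj i (Fin.last N) → uCtrl b a i (Fin.last N) = 0) :
    IsEquilibrium (G.comap Fin.castSucc) (b ∘ Fin.castSucc) (a ∘ Fin.castSucc) := by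
  intro i
  have hi := heq i.castSucc
  rw [sum_filter, Fin.sum_univ_castSucc] at hi
  have hlast_term : (if G.Adj i.castSucc (Fin.last N) then
      uCtrl b a i.castSucc (Fin.last N) • (a i.castSucc - a (Fin.last N)) else 0) = 0 := by
    split_ifs with hadj
    · rw [hlast _ hadj, zero_smul]
    · rfl
  rw [hlast_term, add_zero] at hi
  simpa only [sum_filter, SimpleGraph.comap_adj, uCtrl_comp, Function.comp_apply] using hi

/-- If vertex `k` (here `Fin.last N`) is a leaf of `G` whose unique neighbor is vertex `1`
(here `0`), and `p = a` is an equilibrium of the formation control system on `G`, then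
`u_{1k}(p) = 0` and the sub-configuration `(a_1, …, a_{k-1})` is an equilibrium of the system
on the subgraph induced by the first `k-1` vertices (with the same targets). -/
theorem leaf_equilibrium {n N : ℕ} (G : SimpleGraph (Fin (N + 1)))
    (hleaf : G.neighborSet (Fin.last N) = {(0 : Fin (N + 1))})
    (b a : Fin (N + 1) → EuclideanSpace ℝ (Fin n))
    (heq : IsEquilibrium G b a) :
    uCtrl b a (0 : Fin (N + 1)) (Fin.last N) = 0 ∧
      IsEquilibrium (G.comap (Fin.castSucc : Fin N → Fin (N + 1)))
        (b ∘ Fin.castSucc) (a ∘ Fin.castSucc) := by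
  have hu : uCtrl b a 0 (Fin.last N) = 0 := by
    rw [uCtrl_comm]
    exact heq.uCtrl_eq_zero_of_neighborSet_eq_singleton hleaf
  refine ⟨hu, heq.comap_castSucc fun i hi => ?_⟩
  have hi0 : i = 0 := by
    simpa [hleaf] using (G.mem_neighborSet (Fin.last N) i).mpr hi.symm
  rwa [hi0]
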